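/- Let X be a Fréchet space with increasing generating seminorms (p_i) and associated Hausdorff semimetrics H_i on cb(X). If a multifunction Γ: [0,1] → cb(X) is measurable by seminorm (i.e., for every i ∈ ℕ there exists a sequence of simple multifunctions Γ^i_n with H_i(Γ^i_n(t), Γ(t)) → 0 for a.e. t, where the sequence is allowed to depend on i), then Γ is totally measurable (i.e., there is a single sequence of simple multifunctions G_n such that for every i ∈ ℕ, H_i(G_n(t), Γ(t)) → 0 for a.e. t). -/

import Mathlib

open MeasureTheory Set Filter Topology Pointwise

noncomputable section

variable {X : Type*} [AddCommGroup X] [Module ℝ X] [UniformSpace X]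
  [IsUniformAddGroup X] [ContinuousSMul ℝ X] [CompleteSpace X]

/-- The translation-invariant metric `d(x,y) = ∑_{i=1}^∞ 2^{-i} p_i(x-y)/(1+p_i(x-y))`
built from the sequence of seminorms (indexed from 1). -/
def frechetDist (p : ℕ → Seminorm ℝ X) (x y : X) : ℝ :=
  ∑' i : ℕ, (p (i + 1) (x - y) / (1 + p (i + 1) (x - y))) / 2 ^ (i + 1)

/-- The excess `e(A,B) = sup_{a ∈ A} inf_{b ∈ B} ρ a b` of `A` over `B`
with respect to a distance-like function `ρ`. -/
def excess (ρ : X → X → ℝ) (A B : Set X) : ℝ :=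
  sSup ((fun a => sInf ((fun b => ρ a b) '' B)) '' A)

/-- Hausdorff (semi)distance associated with a distance-like function. -/
def hDist (ρ : X → X → ℝ) (A B : Set X) : ℝ := max (excess ρ A B) (excess ρ B A)

/-- The (semi)distance associated to a seminorm. -/
def semiDist (q : Seminorm ℝ X) (x y : X) : ℝ := q (x - y)

/-- Membership in `cb(X)`: nonempty closed bounded convex subsets of `X`. -/
def IsCB (A : Set X) : Prop :=
  A.Nonempty ∧ IsClosed A ∧ Bornology.IsVonNBounded ℝ A ∧ Convex ℝ A

/-- Membership in `ck(X)`: nonempty compact convex subsets of `X`. -/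
def IsCK (A : Set X) : Prop := A.Nonempty ∧ IsCompact A ∧ Convex ℝ A

/-- A simple multifunction: finitely many values, each attained on a Lebesgue measurable set. -/
def IsSimpleMF (Γ : ℝ → Set X) : Prop :=
  (Set.range Γ).Finite ∧ ∀ C : Set X, MeasurableSet {t | Γ t = C}

/-- The support function `σ(x*, C) = sup_{x ∈ C} ⟨x*, x⟩`. -/
def suppFn (f : X → ℝ) (C : Set X) : ℝ := sSup (f '' C)

open Classical in
/-- Integral of a simple multifunction: `∫_E Γ = ∑_C μ(E ∩ Γ⁻¹{C}) • C` (Minkowski sum). -/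
def simpleIntegral (Γ : ℝ → Set X) (E : Set ℝ) : Set X :=
  if h : (Set.range Γ).Finite then
    ∑ C ∈ h.toFinset, (volume (E ∩ {t | Γ t = C})).toReal • C
  else ∅

/-- The polar of the unit semiball `U = {x : q x ≤ 1}` inside the topological dual. -/
def polarSet (q : Seminorm ℝ X) : Set (X →L[ℝ] ℝ) := {f | ∀ x : X, q x ≤ 1 → |f x| ≤ 1}


end

noncomputable section

variable {X : Type*} [AddCommGroup X] [Module ℝ X] [UniformSpace X]
  [IsUniformAddGroup X] [ContinuousSMul ℝ X] [CompleteSpace X]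

/-- Lebesgue measure on `[0,1]`. -/
def μ01 : MeasureTheory.Measure ℝ := volume.restrict (Set.Icc 0 1)

/-- Bochner measurability of a multifunction with values satisfying `V`:
a.e. approximation by simple multifunctions in the Hausdorff metric of `frechetDist p`. -/
def BochnerMeasMF (p : ℕ → Seminorm ℝ X) (V : Set X → Prop) (Γ : ℝ → Set X) : Prop :=
  ∃ Γₙ : ℕ → ℝ → Set X, (∀ n, IsSimpleMF (Γₙ n) ∧ ∀ t, V (Γₙ n t)) ∧
    ∀ᵐ t ∂μ01, Tendsto (fun n => hDist (frechetDist p) (Γₙ n t) (Γ t)) atTop (𝓝 0)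

/-- Total measurability: a single sequence of simple multifunctions converging a.e.
in every Hausdorff semimetric `H_i`. -/
def TotallyMeasMF (p : ℕ → Seminorm ℝ X) (V : Set X → Prop) (Γ : ℝ → Set X) : Prop :=
  ∃ Γₙ : ℕ → ℝ → Set X, (∀ n, IsSimpleMF (Γₙ n) ∧ ∀ t, V (Γₙ n t)) ∧
    ∀ i : ℕ, ∀ᵐ t ∂μ01, Tendsto (fun n => hDist (semiDist (p i)) (Γₙ n t) (Γ t)) atTop (𝓝 0)

/-- Measurability by seminorm: for every `i` there is a sequence of simple multifunctions
(depending on `i`) converging a.e. in `H_i`. -/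
def SeminormMeasMF (p : ℕ → Seminorm ℝ X) (V : Set X → Prop) (Γ : ℝ → Set X) : Prop :=
  ∀ i : ℕ, ∃ Γₙ : ℕ → ℝ → Set X, (∀ n, IsSimpleMF (Γₙ n) ∧ ∀ t, V (Γₙ n t)) ∧
    ∀ᵐ t ∂μ01, Tendsto (fun n => hDist (semiDist (p i)) (Γₙ n t) (Γ t)) atTop (𝓝 0)

/-- Pettis integrability in `ck(X)`: the support functions are integrable and over each
measurable `E ⊆ [0,1]` there is a compact convex set whose support function is the
integral of the support functions. -/
def PettisIntegrableCK (Γ : ℝ → Set X) : Prop :=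
  (∀ x' : X →L[ℝ] ℝ, MeasureTheory.IntegrableOn
      (fun t => suppFn (⇑x') (Γ t)) (Set.Icc 0 1) volume) ∧
  ∀ E ⊆ Set.Icc (0:ℝ) 1, MeasurableSet E → ∃ C : Set X, IsCK C ∧
    ∀ x' : X →L[ℝ] ℝ, suppFn (⇑x') C = ∫ t in E, suppFn (⇑x') (Γ t)

/-- `Γ` is integrable with integral assignment `I`: it is totally measurable via a sequence
of `ck(X)`-valued simple multifunctions which is Cauchy in mean for every `H_i`, and for each
measurable `E ⊆ [0,1]` the integrals of the simple multifunctions converge in each `H_i` to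
the compact convex set `I E`. -/
def HasIntegralMF (p : ℕ → Seminorm ℝ X) (Γ : ℝ → Set X) (I : Set ℝ → Set X) : Prop :=
  ∃ Γₙ : ℕ → ℝ → Set X,
    (∀ n, IsSimpleMF (Γₙ n) ∧ ∀ t, IsCK (Γₙ n t)) ∧
    (∀ i : ℕ, ∀ᵐ t ∂μ01,
      Tendsto (fun n => hDist (semiDist (p i)) (Γₙ n t) (Γ t)) atTop (𝓝 0)) ∧
    (∀ i : ℕ, ∀ ε > (0:ℝ), ∃ N, ∀ n ≥ N, ∀ m ≥ N,
      ∫ t in Set.Icc (0:ℝ) 1, hDist (semiDist (p i)) (Γₙ n t) (Γₙ m t) < ε) ∧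
    (∀ E ⊆ Set.Icc (0:ℝ) 1, MeasurableSet E → IsCK (I E) ∧
      ∀ i : ℕ, Tendsto (fun n => hDist (semiDist (p i)) (simpleIntegral (Γₙ n) E) (I E))
        atTop (𝓝 0))

/-- `Γ` is integrable by seminorm (p-integrable) with integral assignment `I`. -/
def HasPIntegralMF (p : ℕ → Seminorm ℝ X) (Γ : ℝ → Set X) (I : Set ℝ → Set X) : Prop :=
  ∀ i : ℕ, ∃ Γₙ : ℕ → ℝ → Set X,
    (∀ n, IsSimpleMF (Γₙ n) ∧ ∀ t, IsCK (Γₙ n t)) ∧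
    (∀ᵐ t ∂μ01, Tendsto (fun n => hDist (semiDist (p i)) (Γₙ n t) (Γ t)) atTop (𝓝 0)) ∧
    (∀ n, MeasureTheory.IntegrableOn
      (fun t => hDist (semiDist (p i)) (Γₙ n t) (Γ t)) (Set.Icc 0 1) volume) ∧
    MeasureTheory.TendstoInMeasure μ01
      (fun n t => hDist (semiDist (p i)) (Γₙ n t) (Γ t)) atTop (fun _ => (0:ℝ)) ∧
    (∀ E ⊆ Set.Icc (0:ℝ) 1, MeasurableSet E →
      Tendsto (fun n => ∫ t in E, hDist (semiDist (p i)) (Γₙ n t) (Γ t)) atTop (𝓝 0) ∧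
      (IsCK (I E) ∧
        Tendsto (fun n => hDist (semiDist (p i)) (simpleIntegral (Γₙ n) E) (I E))
          atTop (𝓝 0)))

end

/-!
Fix, for every `i`, an approximating sequence `Γ^i_N` in `H_i`. The distances
`H_i(Γ^i_N(t), Γ(t))` are a.e. limits of the measurable functions `H_i(Γ^i_N(t), Γ^i_m(t))`,
hence converge to `0` in measure on `[0,1]`, so one can pick `N_i` with
`μ{H_i(Γ^i_{N_i}, Γ) ≥ 2⁻ⁱ} < 2⁻ⁱ`. By Borel–Cantelli, for a.e. `t` eventually
`H_n(Γ^n_{N_n}(t), Γ(t)) < 2⁻ⁿ`, and since the seminorms increase, `H_i ≤ H_n` for `n ≥ i`: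
the diagonal sequence `G_n = Γ^n_{N_n}` converges in every `H_i`.
-/

section HausdorffSemiDist

variable {X : Type*} [AddCommGroup X] [Module ℝ X] {q q' : Seminorm ℝ X} {A B C : Set X}
  {x y : X}

noncomputable def infSemiDist (q : Seminorm ℝ X) (x : X) (B : Set X) : ℝ :=
  sInf (semiDist q x '' B)

lemma semiDist_nonneg (q : Seminorm ℝ X) (x y : X) : 0 ≤ semiDist q x y := apply_nonneg q _

lemma semiDist_triangle (q : Seminorm ℝ X) (x y z : X) :
    semiDist q x z ≤ semiDist q x y + semiDist q y z := by
  simpa only [semiDist, sub_add_sub_cancel] using map_add_le_add q (x - y) (y - z)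

lemma infSemiDist_nonneg : 0 ≤ infSemiDist q x B :=
  Real.sInf_nonneg (forall_mem_image.2 fun _ _ => semiDist_nonneg q _ _)

lemma infSemiDist_le_semiDist (hy : y ∈ B) : infSemiDist q x B ≤ semiDist q x y :=
  csInf_le ⟨0, forall_mem_image.2 fun _ _ => semiDist_nonneg q _ _⟩ (mem_image_of_mem _ hy)

lemma le_infSemiDist {c : ℝ} (hB : B.Nonempty) (h : ∀ y ∈ B, c ≤ semiDist q x y) :
    c ≤ infSemiDist q x B :=
  le_csInf (hB.image _) (forall_mem_image.2 h)

lemma infSemiDist_le_semiDist_add (hB : B.Nonempty) :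
    infSemiDist q x B ≤ semiDist q x y + infSemiDist q y B := by
  rw [← sub_le_iff_le_add']
  refine le_infSemiDist hB fun z hz => ?_
  linarith [infSemiDist_le_semiDist (q := q) (x := x) hz, semiDist_triangle q x y z]

lemma infSemiDist_mono (hq : q ≤ q') (hB : B.Nonempty) :
    infSemiDist q x B ≤ infSemiDist q' x B :=
  le_infSemiDist hB fun _ hy => (infSemiDist_le_semiDist hy).trans (hq _)

lemma excess_nonneg : 0 ≤ excess (semiDist q) A B :=
  Real.sSup_nonneg (forall_mem_image.2 fun _ _ => infSemiDist_nonneg)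

lemma excess_le {c : ℝ} (hc : 0 ≤ c) (h : ∀ x ∈ A, infSemiDist q x B ≤ c) :
    excess (semiDist q) A B ≤ c :=
  Real.sSup_le (forall_mem_image.2 h) hc

lemma infSemiDist_le_excess (hA : BddAbove (q '' A)) (hB : B.Nonempty) (hx : x ∈ A) :
    infSemiDist q x B ≤ excess (semiDist q) A B := by
  obtain ⟨r, hr⟩ := hA
  obtain ⟨y, hy⟩ := hB
  refine le_csSup ⟨r + q y, forall_mem_image.2 fun z hz => ?_⟩ (mem_image_of_mem _ hx)
  calc infSemiDist q z B ≤ q (z - y) := infSemiDist_le_semiDist hy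
    _ ≤ q z + q y := map_sub_le_add q z y
    _ ≤ r + q y := by gcongr; exact hr (mem_image_of_mem q hz)

lemma excess_triangle (hA : A.Nonempty) (hB : B.Nonempty) (hB' : BddAbove (q '' B))
    (hC' : BddAbove (q '' C)) :
    excess (semiDist q) C A ≤ excess (semiDist q) C B + excess (semiDist q) B A := by
  refine excess_le (add_nonneg excess_nonneg excess_nonneg) fun z hz => ?_
  have hzB : infSemiDist q z A - excess (semiDist q) B A ≤ infSemiDist q z B :=
    le_infSemiDist hB fun y hy => by
      linarith [infSemiDist_le_semiDist_add (q := q) (x := z) (y := y) hA,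
        infSemiDist_le_excess hB' hA hy]
  linarith [infSemiDist_le_excess hC' hB hz]

lemma excess_mono (hq : q ≤ q') (hA' : BddAbove (q' '' A)) (hB : B.Nonempty) :
    excess (semiDist q) A B ≤ excess (semiDist q') A B :=
  excess_le excess_nonneg fun _ hx =>
    (infSemiDist_mono hq hB).trans (infSemiDist_le_excess hA' hB hx)

lemma hDist_nonneg : 0 ≤ hDist (semiDist q) A B := le_max_of_le_left excess_nonneg

lemma hDist_comm (q : Seminorm ℝ X) (A B : Set X) :
    hDist (semiDist q) A B = hDist (semiDist q) B A := max_comm _ _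

lemma hDist_triangle (hA : A.Nonempty) (hB : B.Nonempty) (hC : C.Nonempty)
    (hA' : BddAbove (q '' A)) (hB' : BddAbove (q '' B)) (hC' : BddAbove (q '' C)) :
    hDist (semiDist q) C A ≤ hDist (semiDist q) C B + hDist (semiDist q) B A :=
  max_le
    ((excess_triangle hA hB hB' hC').trans (add_le_add (le_max_left _ _) (le_max_left _ _)))
    ((excess_triangle hC hB hB' hA').trans
      ((add_le_add (le_max_right _ _) (le_max_right _ _)).trans_eq (add_comm _ _)))

lemma abs_hDist_sub_hDist_le (hA : A.Nonempty) (hB : B.Nonempty) (hC : C.Nonempty)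
    (hA' : BddAbove (q '' A)) (hB' : BddAbove (q '' B)) (hC' : BddAbove (q '' C)) :
    |hDist (semiDist q) C A - hDist (semiDist q) C B| ≤ hDist (semiDist q) A B := by
  rw [abs_sub_le_iff]
  constructor
  · linarith [hDist_triangle hA hB hC hA' hB' hC', hDist_comm q A B]
  · linarith [hDist_triangle hB hA hC hB' hA' hC']

lemma hDist_mono (hq : q ≤ q') (hA : A.Nonempty) (hB : B.Nonempty)
    (hA' : BddAbove (q' '' A)) (hB' : BddAbove (q' '' B)) :
    hDist (semiDist q) A B ≤ hDist (semiDist q') A B :=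
  max_le_max (excess_mono hq hA' hB) (excess_mono hq hB' hA)

end HausdorffSemiDist

section SimpleMultifunction

variable {X : Type*}

def IsSimpleMF.toSimpleFunc {F : ℝ → Set X} (hF : IsSimpleMF F) : SimpleFunc ℝ (Set X) where
  toFun := F
  measurableSet_fiber' C := hF.2 C
  finite_range' := hF.1

lemma IsSimpleMF.measurable_comp₂ {β : Type*} [MeasurableSpace β] {F G : ℝ → Set X}
    (hF : IsSimpleMF F) (hG : IsSimpleMF G) (Φ : Set X → Set X → β) :
    Measurable fun t => Φ (F t) (G t) :=
  ((hF.toSimpleFunc.pair hG.toSimpleFunc).map fun CD : Set X × Set X => Φ CD.1 CD.2).measurable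

end SimpleMultifunction

lemma exists_ae_tendsto_dist_diagonal {α E : Type*} [MeasurableSpace α] {μ : Measure α}
    [IsFiniteMeasure μ] [PseudoMetricSpace E] {f : ℕ → ℕ → α → E} {g : ℕ → α → E}
    (hf : ∀ i N, AEStronglyMeasurable (f i N) μ)
    (hfg : ∀ i, ∀ᵐ t ∂μ, Tendsto (fun N => f i N t) atTop (𝓝 (g i t))) :
    ∃ N : ℕ → ℕ, ∀ᵐ t ∂μ, Tendsto (fun n => dist (f n (N n) t) (g n t)) atTop (𝓝 0) := by
  have hsmall : ∀ i, ∃ N, μ {t | (2⁻¹ : ℝ) ^ i ≤ dist (f i N t) (g i t)} < 2⁻¹ ^ i := fun i =>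
    ((tendstoInMeasure_iff_dist.1 (tendstoInMeasure_of_tendsto_ae (hf i) (hfg i)) _
      (by positivity)).eventually_lt_const (ENNReal.pow_pos (by simp) i)).exists
  choose N hN using hsmall
  have hsum : ∑' i, μ {t | (2⁻¹ : ℝ) ^ i ≤ dist (f i (N i) t) (g i t)} ≠ ⊤ :=
    ne_top_of_le_ne_top (by simp) (ENNReal.tsum_le_tsum fun i => (hN i).le)
  refine ⟨N, ?_⟩
  filter_upwards [ae_eventually_notMem hsum] with t ht
  refine squeeze_zero' (.of_forall fun _ => dist_nonneg) (ht.mono fun _ hn => ?_)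
    (tendsto_pow_atTop_nhds_zero_of_lt_one (r := (2⁻¹ : ℝ)) (by norm_num) (by norm_num))
  exact (not_le.1 hn).le

section Approximation

variable {X : Type*} [AddCommGroup X] [Module ℝ X] {q : Seminorm ℝ X} {V : Set X → Prop}

lemma tendsto_hDist_of_tendsto_hDist_zero (hV : ∀ A, V A → A.Nonempty ∧ BddAbove (q '' A))
    {C B : Set X} {G : ℕ → Set X} (hC : V C) (hB : V B) (hG : ∀ m, V (G m))
    (hlim : Tendsto (fun m => hDist (semiDist q) (G m) B) atTop (𝓝 0)) :
    Tendsto (fun m => hDist (semiDist q) C (G m)) atTop (𝓝 (hDist (semiDist q) C B)) := by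
  rw [tendsto_iff_dist_tendsto_zero]
  refine squeeze_zero (fun _ => dist_nonneg) (fun m => ?_) hlim
  obtain ⟨hCne, hCbdd⟩ := hV C hC
  obtain ⟨hBne, hBbdd⟩ := hV B hB
  obtain ⟨hGne, hGbdd⟩ := hV (G m) (hG m)
  exact abs_hDist_sub_hDist_le hGne hBne hCne hGbdd hBbdd hCbdd

lemma aestronglyMeasurable_hDist_of_ae_tendsto {μ : Measure ℝ}
    (hV : ∀ A, V A → A.Nonempty ∧ BddAbove (q '' A)) {F Γ : ℝ → Set X} {G : ℕ → ℝ → Set X}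
    (hF : IsSimpleMF F ∧ ∀ t, V (F t)) (hG : ∀ m, IsSimpleMF (G m) ∧ ∀ t, V (G m t))
    (hΓ : ∀ᵐ t ∂μ, V (Γ t))
    (hlim : ∀ᵐ t ∂μ, Tendsto (fun m => hDist (semiDist q) (G m t) (Γ t)) atTop (𝓝 0)) :
    AEStronglyMeasurable (fun t => hDist (semiDist q) (F t) (Γ t)) μ := by
  have hmeas : ∀ m, Measurable fun t => hDist (semiDist q) (F t) (G m t) := fun m =>
    hF.1.measurable_comp₂ (hG m).1 (hDist (semiDist q))
  refine (aemeasurable_of_tendsto_metrizable_ae atTop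
    (fun m => (hmeas m).aemeasurable) ?_).aestronglyMeasurable
  filter_upwards [hΓ, hlim] with t hΓt hlimt
  exact tendsto_hDist_of_tendsto_hDist_zero hV (hF.2 t) hΓt (fun m => (hG m).2 t) hlimt

end Approximation

instance isFiniteMeasure_μ01 : IsFiniteMeasure μ01 := by
  unfold μ01
  infer_instance

lemma IsCB.bddAbove_image {X : Type*} [AddCommGroup X] [Module ℝ X] [UniformSpace X]
    {p : ℕ → Seminorm ℝ X} (hp : WithSeminorms p) {A : Set X} (hA : IsCB A) (i : ℕ) :
    BddAbove (p i '' A) := by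
  obtain ⟨r, -, hr⟩ := hp.isVonNBounded_iff_seminorm_bounded.1 hA.2.2.1 i
  exact ⟨r, forall_mem_image.2 fun x hx => (hr x hx).le⟩

theorem stmt5_general {X : Type*} [AddCommGroup X] [Module ℝ X] [UniformSpace X]
    (p : ℕ → Seminorm ℝ X) (hp : WithSeminorms p) (hpmono : Monotone p)
    (Γ : ℝ → Set X) (hΓ : ∀ t ∈ Set.Icc (0:ℝ) 1, IsCB (Γ t))
    (hsm : SeminormMeasMF p IsCB Γ) :
    TotallyMeasMF p IsCB Γ := by
  have hbdd : ∀ i A, IsCB A → A.Nonempty ∧ BddAbove (p i '' A) :=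
    fun i _ hA => ⟨hA.1, hA.bddAbove_image hp i⟩
  have hΓae : ∀ᵐ t ∂μ01, IsCB (Γ t) := (ae_restrict_mem measurableSet_Icc).mono hΓ
  choose Γs hΓs hae using hsm
  obtain ⟨N, hN⟩ := exists_ae_tendsto_dist_diagonal (g := fun _ _ => (0 : ℝ))
    (fun i n => aestronglyMeasurable_hDist_of_ae_tendsto (hbdd i) (hΓs i n) (hΓs i) hΓae (hae i))
    hae
  refine ⟨fun n => Γs n (N n), fun n => hΓs n (N n), fun i => ?_⟩
  filter_upwards [hN, hΓae] with t ht hΓt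
  refine squeeze_zero' (.of_forall fun _ => hDist_nonneg) ?_ ht
  filter_upwards [eventually_ge_atTop i] with n hn
  obtain ⟨hG, hG'⟩ := hbdd n _ ((hΓs n (N n)).2 t)
  obtain ⟨hΓn, hΓn'⟩ := hbdd n _ hΓt
  rw [Real.dist_0_eq_abs]
  exact (hDist_mono (hpmono hn) hG hΓn hG' hΓn').trans (le_abs_self _)

/-- a `cb(X)`-valued multifunction that is measurable by seminorm is totally
measurable. -/
theorem stmt5 {X : Type*} [AddCommGroup X] [Module ℝ X] [UniformSpace X]
    [IsUniformAddGroup X] [ContinuousSMul ℝ X] [CompleteSpace X]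
    (p : ℕ → Seminorm ℝ X) (hp : WithSeminorms p) (hpmono : Monotone p)
    (Γ : ℝ → Set X) (hΓ : ∀ t ∈ Set.Icc (0:ℝ) 1, IsCB (Γ t))
    (hsm : SeminormMeasMF p IsCB Γ) :
    TotallyMeasMF p IsCB Γ :=
  stmt5_general p hp hpmono Γ hΓ hsm
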